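/- Let α be a unit-speed non-null Frenet curve of order 3 in a 3-dimensional pseudo-Riemannian manifold, and f smooth with g(∇f,∇f) constant along α, Hessian of f identically zero, and g(∇f,V₃) a nonzero constant. Then ε₀(k₂/k₁)² is constant along α; in particular if ε₀, ε₁ are constant signs, the ratio k₂/k₁ of torsion to curvature is constant (α is a generalized helix with axis ∇f). -/

import Mathlib

/-!
Write `aᵢ = g(F, Vᵢ)` for the components of the parallel field `F`. Since `F` is parallel,
`aᵢ' = g(F, ∇_{V₁}Vᵢ)`, so the Frenet equations give `0 = a₃' = -ε₁ε₂k₂a₂`, hence `a₂ ≡ 0`;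
then `a₁' = k₁a₂ = 0` and `0 = a₂' = -ε₀ε₁k₁a₁ + k₂a₃`. Thus `k₂/k₁ = ε₀ε₁a₁/c` with `a₁`
constant.
-/

lemma pairing_add_right {E : Type*} [AddCommGroup E] {g : ℝ → E → E → ℝ}
    (hg_symm : ∀ t x y, g t x y = g t y x)
    (hg_add : ∀ t x y z, g t (x + y) z = g t x z + g t y z) (t : ℝ) (x y z : E) :
    g t x (y + z) = g t x y + g t x z := by
  rw [hg_symm, hg_add, hg_symm, hg_symm t z]

section PairingWithParallelField

variable {E : Type*} [AddCommGroup E] [Module ℝ E] {g : ℝ → E → E → ℝ}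
  {D : (ℝ → E) → (ℝ → E)} {F : ℝ → E}

lemma pairing_smul_right (hg_symm : ∀ t x y, g t x y = g t y x)
    (hg_smul : ∀ t (c : ℝ) x y, g t (c • x) y = c * g t x y) (t c : ℝ) (x y : E) :
    g t x (c • y) = c * g t x y := by
  rw [hg_symm, hg_smul, hg_symm]

lemma hasDerivAt_pairing_of_parallel
    (hg_smul : ∀ t (c : ℝ) x y, g t (c • x) y = c * g t x y)
    (hcompat : ∀ X Y : ℝ → E, ∀ t : ℝ,
      HasDerivAt (fun s => g s (X s) (Y s)) (g t (D X t) (Y t) + g t (X t) (D Y t)) t)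
    (hpar : ∀ t, D F t = 0) (Y : ℝ → E) (t : ℝ) :
    HasDerivAt (fun s => g s (F s) (Y s)) (g t (F t) (D Y t)) t := by
  have hzero : g t 0 (Y t) = 0 := by simpa using hg_smul t 0 0 (Y t)
  simpa [hpar t, hzero] using hcompat F Y t

lemma pairing_derivative_eq_zero_of_parallel_of_const
    (hg_smul : ∀ t (c : ℝ) x y, g t (c • x) y = c * g t x y)
    (hcompat : ∀ X Y : ℝ → E, ∀ t : ℝ,
      HasDerivAt (fun s => g s (X s) (Y s)) (g t (D X t) (Y t) + g t (X t) (D Y t)) t)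
    (hpar : ∀ t, D F t = 0) {Y : ℝ → E} {c : ℝ} (hY : ∀ t, g t (F t) (Y t) = c) (t : ℝ) :
    g t (F t) (D Y t) = 0 := by
  have hconst : HasDerivAt (fun s => g s (F s) (Y s)) 0 t := by
    simpa only [hY] using hasDerivAt_const t c
  exact (hasDerivAt_pairing_of_parallel hg_smul hcompat hpar Y t).unique hconst

lemma pairing_const_of_parallel_of_derivative_eq_zero
    (hg_smul : ∀ t (c : ℝ) x y, g t (c • x) y = c * g t x y)
    (hcompat : ∀ X Y : ℝ → E, ∀ t : ℝ,
      HasDerivAt (fun s => g s (X s) (Y s)) (g t (D X t) (Y t) + g t (X t) (D Y t)) t)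
    (hpar : ∀ t, D F t = 0) {Y : ℝ → E} (hDY : ∀ t, g t (F t) (D Y t) = 0) (t : ℝ) :
    g t (F t) (Y t) = g 0 (F 0) (Y 0) := by
  have hderiv t := hasDerivAt_pairing_of_parallel hg_smul hcompat hpar Y t
  simp only [hDY] at hderiv
  exact is_const_of_deriv_eq_zero (fun s => (hderiv s).differentiableAt)
    (fun s => (hderiv s).deriv) t 0

end PairingWithParallelField

theorem stmt_10_general
    {E : Type*} [AddCommGroup E] [Module ℝ E]
    (g : ℝ → E → E → ℝ)
    (hg_symm : ∀ t x y, g t x y = g t y x)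
    (hg_add : ∀ t x y z, g t (x + y) z = g t x z + g t y z)
    (hg_smul : ∀ t (c : ℝ) x y, g t (c • x) y = c * g t x y)
    (D : (ℝ → E) → (ℝ → E))
    (hcompat : ∀ X Y : ℝ → E, ∀ t : ℝ,
      HasDerivAt (fun s => g s (X s) (Y s)) (g t (D X t) (Y t) + g t (X t) (D Y t)) t)
    (V₁ V₂ V₃ : ℝ → E) (k₁ k₂ : ℝ → ℝ) (ε₀ ε₁ ε₂ : ℝ)
    (hε₁ : ε₁ = 1 ∨ ε₁ = -1) (hε₂ : ε₂ = 1 ∨ ε₂ = -1)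
    (hk₁ : ∀ t, 0 < k₁ t) (hk₂ : ∀ t, 0 < k₂ t)
    (hf₁ : ∀ t, D V₁ t = k₁ t • V₂ t)
    (hf₂ : ∀ t, D V₂ t = (-(ε₀ * ε₁ * k₁ t)) • V₁ t + k₂ t • V₃ t)
    (hf₃ : ∀ t, D V₃ t = (-(ε₁ * ε₂ * k₂ t)) • V₂ t)
    (F : ℝ → E)
    (hpar : ∀ t, D F t = 0)
    (c : ℝ) (hc : c ≠ 0)
    (hslant : ∀ t, g t (F t) (V₃ t) = c) :
    (∃ a : ℝ, ∀ t, ε₀ * (k₂ t / k₁ t) ^ 2 = a) ∧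
    (∃ b : ℝ, ∀ t, k₂ t / k₁ t = b) := by
  have hε₁₂ : ε₁ * ε₂ ≠ 0 := by
    rcases hε₁ with rfl | rfl <;> rcases hε₂ with rfl | rfl <;> norm_num
  have hderiv_zero {Y : ℝ → E} {a : ℝ} (hY : ∀ t, g t (F t) (Y t) = a) :=
    pairing_derivative_eq_zero_of_parallel_of_const hg_smul hcompat hpar hY
  have ha₂ (t : ℝ) : g t (F t) (V₂ t) = 0 := by
    have h := hderiv_zero hslant t
    rw [hf₃, pairing_smul_right hg_symm hg_smul] at h
    exact (mul_eq_zero.mp h).resolve_left (neg_ne_zero.mpr (mul_ne_zero hε₁₂ (hk₂ t).ne'))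
  have ha₁ := pairing_const_of_parallel_of_derivative_eq_zero hg_smul hcompat hpar
    (Y := V₁) fun t => by rw [hf₁, pairing_smul_right hg_symm hg_smul, ha₂, mul_zero]
  have hratio (t : ℝ) : k₂ t / k₁ t = ε₀ * ε₁ * g 0 (F 0) (V₁ 0) / c := by
    have h := hderiv_zero ha₂ t
    rw [hf₂, pairing_add_right hg_symm hg_add, pairing_smul_right hg_symm hg_smul,
      pairing_smul_right hg_symm hg_smul, hslant, ha₁] at h
    field_simp [(hk₁ t).ne']
    linarith
  exact ⟨⟨_, fun t => by rw [hratio]⟩, ⟨_, hratio⟩⟩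

/-- The `n = 3` case of Theorem 3.3: for an f-eikonal V₃-slant helix of order 3,
`ε₀(k₂/k₁)²` is constant along `α`; in particular the ratio `k₂/k₁` is constant. -/
theorem stmt_10
    {E : Type*} [AddCommGroup E] [Module ℝ E]
    (g : ℝ → E → E → ℝ)
    (hg_symm : ∀ t x y, g t x y = g t y x)
    (hg_add : ∀ t x y z, g t (x + y) z = g t x z + g t y z)
    (hg_smul : ∀ t (c : ℝ) x y, g t (c • x) y = c * g t x y)
    (D : (ℝ → E) → (ℝ → E))
    (hcompat : ∀ X Y : ℝ → E, ∀ t : ℝ,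
      HasDerivAt (fun s => g s (X s) (Y s)) (g t (D X t) (Y t) + g t (X t) (D Y t)) t)
    (V₁ V₂ V₃ : ℝ → E) (k₁ k₂ : ℝ → ℝ) (ε₀ ε₁ ε₂ : ℝ)
    (hε₀ : ε₀ = 1 ∨ ε₀ = -1) (hε₁ : ε₁ = 1 ∨ ε₁ = -1) (hε₂ : ε₂ = 1 ∨ ε₂ = -1)
    (hk₁ : ∀ t, 0 < k₁ t) (hk₂ : ∀ t, 0 < k₂ t)
    (h11 : ∀ t, g t (V₁ t) (V₁ t) = ε₀) (h22 : ∀ t, g t (V₂ t) (V₂ t) = ε₁)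
    (h33 : ∀ t, g t (V₃ t) (V₃ t) = ε₂)
    (h12 : ∀ t, g t (V₁ t) (V₂ t) = 0) (h13 : ∀ t, g t (V₁ t) (V₃ t) = 0)
    (h23 : ∀ t, g t (V₂ t) (V₃ t) = 0)
    (hf₁ : ∀ t, D V₁ t = k₁ t • V₂ t)
    (hf₂ : ∀ t, D V₂ t = (-(ε₀ * ε₁ * k₁ t)) • V₁ t + k₂ t • V₃ t)
    (hf₃ : ∀ t, D V₃ t = (-(ε₁ * ε₂ * k₂ t)) • V₂ t)
    (F : ℝ → E)
    (hpar : ∀ t, D F t = 0)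
    (c : ℝ) (hc : c ≠ 0)
    (hslant : ∀ t, g t (F t) (V₃ t) = c)
    (hframe : ∃ l₁ l₂ l₃ : ℝ → ℝ, ∀ t, F t = l₁ t • V₁ t + l₂ t • V₂ t + l₃ t • V₃ t)
    (heik : ∃ a : ℝ, ∀ t, g t (F t) (F t) = a) :
    (∃ a : ℝ, ∀ t, ε₀ * (k₂ t / k₁ t) ^ 2 = a) ∧
    (∃ b : ℝ, ∀ t, k₂ t / k₁ t = b) :=
  stmt_10_general g hg_symm hg_add hg_smul D hcompat V₁ V₂ V₃ k₁ k₂ ε₀ ε₁ ε₂ hε₁ hε₂ hk₁ hk₂ hf₁ hf₂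
    hf₃ F hpar c hc hslant
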